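/- For any positive definite d×d matrices A, B with A, B ⪰ λI (λ > 0), ‖A^{-1/2} − B^{-1/2}‖ ≤ λ^{-3/2} ‖A − B‖. -/

import Mathlib

/-- The operator (spectral) norm of a real matrix, viewed as a linear map on Euclidean space. -/
noncomputable def opNorm {d : ℕ} (A : Matrix (Fin d) (Fin d) ℝ) : ℝ :=
  ‖Matrix.toEuclideanCLM (𝕜 := ℝ) A‖

section

open scoped ComplexOrder

/-- The square root of a positive semidefinite matrix, as `Matrix.PosSemidef.sqrt` was defined
in Mathlib (December 2024); it has since been removed from Mathlib. -/
noncomputable def Matrix.PosSemidef.sqrt {n : Type*} [Fintype n] [DecidableEq n] {𝕜 : Type*}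
    [RCLike 𝕜] {A : Matrix n n 𝕜} (hA : A.PosSemidef) : Matrix n n 𝕜 :=
  hA.1.eigenvectorUnitary.1 * Matrix.diagonal ((↑) ∘ (Real.sqrt ∘ hA.1.eigenvalues)) *
    (star hA.1.eigenvectorUnitary : Matrix n n 𝕜)

end

/-!
Put `X = A^{1/2}`, `Y = B^{1/2}` and `μ = √λ`, so that `X, Y ⪰ μ`, `‖X⁻¹‖, ‖Y⁻¹‖ ≤ μ⁻¹`, and
`T = X⁻¹ - Y⁻¹` solves the Sylvester equation `X T + T Y = X⁻¹ (B - A) Y⁻¹`. Testing the left side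
against a unit eigenvector `v` of `T` with eigenvalue `δ` gives
`⟪v, (X T + T Y) v⟫ = δ (⟪v, X v⟫ + ⟪v, Y v⟫)`, hence `2 μ ‖T‖ ≤ ‖X T + T Y‖ ≤ μ⁻² ‖A - B‖`.
-/

open scoped ComplexOrder MatrixOrder Matrix.Norms.L2Operator

namespace Matrix

section Sqrt

variable {n 𝕜 : Type*} [Fintype n] [DecidableEq n] [RCLike 𝕜]

lemma PosSemidef.sqrt_eq_cfc {A : Matrix n n 𝕜} (hA : A.PosSemidef) :
    hA.sqrt = cfc Real.sqrt A := by
  rw [hA.1.cfc_eq]; rfl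

lemma PosSemidef.sqrt_mul_self {A : Matrix n n 𝕜} (hA : A.PosSemidef) :
    hA.sqrt * hA.sqrt = A := by
  rw [hA.sqrt_eq_cfc, ← cfc_mul _ _ A]
  nth_rw 2 [← cfc_id ℝ A]
  exact cfc_congr fun x hx => Real.mul_self_sqrt (spectrum_nonneg_of_nonneg hA.nonneg hx)

lemma PosSemidef.smul_one_le_sqrt {A : Matrix n n 𝕜} (hA : A.PosSemidef) {r : ℝ}
    (hr : r • (1 : Matrix n n 𝕜) ≤ A) : √r • (1 : Matrix n n 𝕜) ≤ hA.sqrt := by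
  rw [← Algebra.algebraMap_eq_smul_one, algebraMap_le_iff_le_spectrum] at hr
  rw [← Algebra.algebraMap_eq_smul_one, hA.sqrt_eq_cfc]
  exact (algebraMap_le_cfc_iff Real.sqrt √r A).mpr fun x hx => Real.sqrt_le_sqrt (hr x hx)

end Sqrt

lemma mul_inv_sub_inv_add_inv_sub_inv_mul {n α : Type*} [Fintype n] [DecidableEq n] [CommRing α]
    {X Y : Matrix n n α} (hX : IsUnit X.det) (hY : IsUnit Y.det) :
    X * (X⁻¹ - Y⁻¹) + (X⁻¹ - Y⁻¹) * Y = X⁻¹ * (Y * Y - X * X) * Y⁻¹ := by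
  simp only [Matrix.mul_sub, Matrix.sub_mul, mul_nonsing_inv _ hX, nonsing_inv_mul _ hY,
    ← Matrix.mul_assoc, mul_nonsing_inv_cancel_right Y _ hY, nonsing_inv_mul, Matrix.one_mul, hX]
  abel

section RealMatrix

variable {n : Type*} [Fintype n] [DecidableEq n]

lemma isSelfAdjoint_of_smul_one_le {X : Matrix n n ℝ} {μ : ℝ} (hX : μ • 1 ≤ X) :
    IsSelfAdjoint X :=
  IsSelfAdjoint.of_ge hX ((IsSelfAdjoint.all μ).smul (.one _))

lemma le_of_mem_spectrum_of_smul_one_le {X : Matrix n n ℝ} {μ : ℝ} (hX : μ • 1 ≤ X) :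
    ∀ x ∈ spectrum ℝ X, μ ≤ x := by
  rw [← algebraMap_le_iff_le_spectrum (ha := isSelfAdjoint_of_smul_one_le hX),
    Algebra.algebraMap_eq_smul_one]
  exact hX

lemma isUnit_of_smul_one_le {X : Matrix n n ℝ} {μ : ℝ} (hμ : 0 < μ) (hX : μ • 1 ≤ X) :
    IsUnit X :=
  spectrum.zero_notMem_iff ℝ |>.mp fun h0 => (le_of_mem_spectrum_of_smul_one_le hX 0 h0).not_gt hμ

lemma norm_inv_le_of_smul_one_le {X : Matrix n n ℝ} {μ : ℝ} (hμ : 0 < μ) (hX : μ • 1 ≤ X) :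
    ‖X⁻¹‖ ≤ μ⁻¹ := by
  rw [nonsing_inv_eq_ringInverse, ← cfc_ringInverse_id (R := ℝ)
    (ha_unit := isUnit_of_smul_one_le hμ hX) (ha := isSelfAdjoint_of_smul_one_le hX)]
  refine norm_cfc_le (by positivity) fun x hx => ?_
  have hμx := le_of_mem_spectrum_of_smul_one_le hX x hx
  rw [norm_inv, Real.norm_of_nonneg (hμ.le.trans hμx)]
  exact inv_anti₀ hμ hμx

lemma mul_dotProduct_self_le_of_smul_one_le {X : Matrix n n ℝ} {μ : ℝ} (hX : μ • 1 ≤ X)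
    (v : n → ℝ) : μ * (v ⬝ᵥ v) ≤ v ⬝ᵥ X *ᵥ v := by
  have := (le_iff.mp hX).dotProduct_mulVec_nonneg v
  rwa [star_trivial, sub_mulVec, dotProduct_sub, smul_mulVec, one_mulVec, dotProduct_smul,
    smul_eq_mul, sub_nonneg] at this

lemma abs_dotProduct_mulVec_le (M : Matrix n n ℝ) (x : EuclideanSpace ℝ n) :
    |x ⬝ᵥ M *ᵥ x| ≤ ‖M‖ * ‖x‖ ^ 2 := by
  rw [← inner_toEuclideanCLM]
  calc _ ≤ ‖x‖ * ‖toEuclideanCLM (𝕜 := ℝ) M x‖ := abs_real_inner_le_norm _ _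
    _ ≤ ‖x‖ * (‖M‖ * ‖x‖) := by gcongr; exact (toEuclideanCLM (𝕜 := ℝ) M).le_opNorm x
    _ = ‖M‖ * ‖x‖ ^ 2 := by ring

lemma two_mul_mul_abs_le_norm_mul_add_mul {X Y T : Matrix n n ℝ} {μ δ : ℝ} (hX : μ • 1 ≤ X)
    (hY : μ • 1 ≤ Y) (hT : T.IsHermitian) {v : EuclideanSpace ℝ n} (hv : ‖v‖ = 1)
    (hTv : T *ᵥ v = δ • ⇑v) : 2 * μ * |δ| ≤ ‖X * T + T * Y‖ := by
  have hvv : ⇑v ⬝ᵥ ⇑v = 1 := by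
    have := real_inner_self_eq_norm_sq v
    rwa [EuclideanSpace.inner_eq_star_dotProduct, star_trivial, hv, one_pow] at this
  have hsum : 2 * μ ≤ v ⬝ᵥ X *ᵥ v + v ⬝ᵥ Y *ᵥ v := by
    have hXv := mul_dotProduct_self_le_of_smul_one_le hX v
    have hYv := mul_dotProduct_self_le_of_smul_one_le hY v
    rw [hvv, mul_one] at hXv hYv
    linarith
  -- `T` is symmetric, so it acts on the left factor of `v ⬝ᵥ T *ᵥ (Y *ᵥ v)` as well.
  have hform : v ⬝ᵥ (X * T + T * Y) *ᵥ v = δ * (v ⬝ᵥ X *ᵥ v + v ⬝ᵥ Y *ᵥ v) := by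
    rw [add_mulVec, dotProduct_add, ← mulVec_mulVec, ← mulVec_mulVec, hTv, dotProduct_mulVec ⇑v T,
      ← mulVec_transpose, (isHermitian_iff_isSymm.mp hT).eq, hTv, mulVec_smul, dotProduct_smul,
      smul_dotProduct, smul_eq_mul, smul_eq_mul, mul_add]
  calc 2 * μ * |δ| ≤ |δ| * |v ⬝ᵥ X *ᵥ v + v ⬝ᵥ Y *ᵥ v| := by
        rw [mul_comm]; gcongr; exact hsum.trans (le_abs_self _)
    _ = |v ⬝ᵥ (X * T + T * Y) *ᵥ v| := by rw [hform, abs_mul]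
    _ ≤ ‖X * T + T * Y‖ := by simpa [hv] using abs_dotProduct_mulVec_le (X * T + T * Y) v

theorem two_mul_mul_norm_le_norm_mul_add_mul {X Y T : Matrix n n ℝ} {μ : ℝ} (hX : μ • 1 ≤ X)
    (hY : μ • 1 ≤ Y) (hT : T.IsHermitian) : 2 * μ * ‖T‖ ≤ ‖X * T + T * Y‖ := by
  cases subsingleton_or_nontrivial (Matrix n n ℝ)
  · simp [Subsingleton.elim T 0]
  obtain ⟨x, hx, hxT⟩ := (IsGreatest.norm_cfc (id : ℝ → ℝ) T (ha := hT.isSelfAdjoint)).1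
  rw [cfc_id ℝ T hT.isSelfAdjoint] at hxT
  obtain ⟨i, rfl⟩ := hT.spectrum_real_eq_range_eigenvalues ▸ hx
  rw [← hxT]
  exact two_mul_mul_abs_le_norm_mul_add_mul hX hY hT (hT.eigenvectorBasis.orthonormal.1 i)
    (hT.mulVec_eigenvectorBasis i)

theorem norm_inv_sub_inv_le {X Y : Matrix n n ℝ} {μ : ℝ} (hμ : 0 < μ) (hX : μ • 1 ≤ X)
    (hY : μ • 1 ≤ Y) : 2 * μ ^ 3 * ‖X⁻¹ - Y⁻¹‖ ≤ ‖X * X - Y * Y‖ := by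
  have hXdet := (isUnit_iff_isUnit_det X).mp (isUnit_of_smul_one_le hμ hX)
  have hYdet := (isUnit_iff_isUnit_det Y).mp (isUnit_of_smul_one_le hμ hY)
  have hT : (X⁻¹ - Y⁻¹).IsHermitian := (isSelfAdjoint_of_smul_one_le hX).isHermitian.inv.sub
    (isSelfAdjoint_of_smul_one_le hY).isHermitian.inv
  calc 2 * μ ^ 3 * ‖X⁻¹ - Y⁻¹‖ = μ ^ 2 * (2 * μ * ‖X⁻¹ - Y⁻¹‖) := by ring
    _ ≤ μ ^ 2 * ‖X * (X⁻¹ - Y⁻¹) + (X⁻¹ - Y⁻¹) * Y‖ := by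
      gcongr; exact two_mul_mul_norm_le_norm_mul_add_mul hX hY hT
    _ = μ ^ 2 * ‖X⁻¹ * (Y * Y - X * X) * Y⁻¹‖ := by
      rw [mul_inv_sub_inv_add_inv_sub_inv_mul hXdet hYdet]
    _ ≤ μ ^ 2 * (‖X⁻¹‖ * ‖Y * Y - X * X‖ * ‖Y⁻¹‖) := by
      gcongr
      exact (l2_opNorm_mul _ _).trans (by gcongr; exact l2_opNorm_mul _ _)
    _ ≤ μ ^ 2 * (μ⁻¹ * ‖Y * Y - X * X‖ * μ⁻¹) := by
      gcongr
      · exact norm_inv_le_of_smul_one_le hμ hX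
      · exact norm_inv_le_of_smul_one_le hμ hY
    _ = ‖X * X - Y * Y‖ := by
      rw [norm_sub_rev]; field_simp

end RealMatrix

end Matrix

lemma opNorm_eq_norm {d : ℕ} (M : Matrix (Fin d) (Fin d) ℝ) : opNorm M = ‖M‖ := rfl

/-- Lipschitzness of the inverse matrix square root: if `A, B ⪰ λ I` (`λ > 0`) then
`‖A^{-1/2} - B^{-1/2}‖ ≤ λ^{-3/2} ‖A - B‖`. -/
theorem stmt8 {d : ℕ} (lam : ℝ) (hlam : 0 < lam)
    (A B : Matrix (Fin d) (Fin d) ℝ) (hA : A.PosDef) (hB : B.PosDef)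
    (hAl : (A - lam • 1).PosSemidef) (hBl : (B - lam • 1).PosSemidef) :
    opNorm ((hA.posSemidef.sqrt)⁻¹ - (hB.posSemidef.sqrt)⁻¹)
      ≤ lam ^ (-(3 : ℝ) / 2) * opNorm (A - B) := by
  have hμ : 0 < √lam := Real.sqrt_pos.mpr hlam
  have key := Matrix.norm_inv_sub_inv_le hμ (hA.posSemidef.smul_one_le_sqrt hAl)
    (hB.posSemidef.smul_one_le_sqrt hBl)
  rw [hA.posSemidef.sqrt_mul_self, hB.posSemidef.sqrt_mul_self] at key
  have hpow : lam ^ (-(3 : ℝ) / 2) = (√lam ^ 3)⁻¹ := by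
    rw [Real.sqrt_eq_rpow, ← Real.rpow_natCast, ← Real.rpow_mul hlam.le, ← Real.rpow_neg hlam.le]
    norm_num
  rw [opNorm_eq_norm, opNorm_eq_norm, hpow, inv_mul_eq_div, le_div_iff₀' (by positivity)]
  linarith [mul_nonneg (pow_pos hμ 3).le
    (norm_nonneg ((hA.posSemidef.sqrt)⁻¹ - (hB.posSemidef.sqrt)⁻¹))]
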